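/- Every nondegenerate line segment contained in the attractor K of the main example is parallel to the x-axis. -/

import Mathlib

open Set Complex

/-- `K` is the attractor (invariant nonempty compact set) of the system `S`. -/
def IsAttractor {X : Type*} [MetricSpace X] {m : ℕ} (S : Fin m → X → X) (K : Set X) : Prop :=
  K.Nonempty ∧ IsCompact K ∧ K = ⋃ i, S i '' K

/-- The five similarities of the main example, in the plane `ℝ² ≃ ℂ`:
`S₂ x = x/2 + (2,0)`, `S_k x = x/4 + a_k` for `a₁=(0,0)`, `a₃=(3,0)`,
`a₄=(1,√3)`, `a₅=(3/2, 3√3/2)`. -/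
noncomputable def mainS : Fin 5 → ℂ → ℂ :=
  ![fun w => w / 4,
    fun w => w / 2 + 2,
    fun w => w / 4 + 3,
    fun w => w / 4 + (1 + Real.sqrt 3 * Complex.I),
    fun w => w / 4 + (3 / 2 + (3 * Real.sqrt 3 / 2) * Complex.I)]

/-- The closed triangle with vertices `A=(0,0)`, `B=(2,2√3)`, `C=(4,0)`. -/
noncomputable def tri : Set ℂ :=
  convexHull ℝ {0, 2 + 2 * Real.sqrt 3 * Complex.I, 4}

/-!
The attractor lies in the triangle `W = upTriangle 0 4`, so each `S_i(K)` lies in the triangle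
`S_i(W)`. Since `S_3 = S_2 ∘ S_2`, the set `K` is covered by `S_1(K), S_2(K), S_4(K), S_5(K)`,
whose triangles are pairwise disjoint except that those of `S_4` and `S_5` share one vertex.
A segment in `K` is connected, so, after cutting it at that vertex, half of it lies in one of
these triangles, and `S_i⁻¹` maps that half to a segment in `K` at least twice as tall.
Since `K` is bounded, the height of the original segment must be zero.
Indices are shifted by one: `S_k` is `mainS (k - 1)`.
-/

open Metric Function
open scoped NNReal

section General

variable {X : Type*} [MetricSpace X]

theorem infDist_le_mul_infDist_of_mapsTo {f : X → X} {c : ℝ≥0} (hf : LipschitzWith c f)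
    {W : Set X} (hW : W.Nonempty) (hfW : MapsTo f W W) (y : X) :
    infDist (f y) W ≤ c * infDist y W := by
  have := hW.to_subtype
  rw [infDist_eq_iInf (x := y), Real.mul_iInf_of_nonneg (NNReal.coe_nonneg c)]
  exact le_ciInf fun w => (infDist_le_dist_of_mem (hfW w.2)).trans (hf.dist_le_mul y w)

variable {m : ℕ} {S : Fin m → X → X} {K : Set X}

theorem IsAttractor.mapsTo (hK : IsAttractor S K) (i : Fin m) : MapsTo (S i) K K :=
  fun _ hy => hK.2.2.superset (mem_iUnion_of_mem i (mem_image_of_mem _ hy))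

theorem IsAttractor.mem_of_isFixedPt [CompleteSpace X] (hK : IsAttractor S K) {i : Fin m}
    {c : ℝ≥0} (hc : ContractingWith c (S i)) {x : X} (hx : IsFixedPt (S i) x) : x ∈ K := by
  have : Nonempty X := ⟨x⟩
  obtain ⟨y, hy⟩ := hK.1
  rw [hc.fixedPoint_unique hx]
  exact hK.2.1.isClosed.mem_of_tendsto (hc.tendsto_iterate_fixedPoint y)
    (Filter.Eventually.of_forall fun n => (hK.mapsTo i).iterate n hy)

/-- The function `infDist · W` attains its maximum on `K` at some `S i y`, where it is at most
`c` times its value at `y ∈ K`; hence the maximum vanishes. -/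
theorem IsAttractor.subset_of_mapsTo (hK : IsAttractor S K) {c : ℝ≥0}
    (hS : ∀ i, ContractingWith c (S i)) {W : Set X} (hW : IsClosed W) (hWne : W.Nonempty)
    (hSW : ∀ i, MapsTo (S i) W W) : K ⊆ W := by
  obtain ⟨x, hxK, hmax⟩ := hK.2.1.exists_isMaxOn hK.1 (continuous_infDist_pt W).continuousOn
  have hx : infDist x W = 0 := by
    obtain ⟨i, y, hyK, rfl⟩ := mem_iUnion.1 (hK.2.2.subset hxK)
    have h := infDist_le_mul_infDist_of_mapsTo (hS i).2 hWne (hSW i) y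
    have hy : infDist y W ≤ infDist (S i y) W := hmax hyK
    nlinarith [(hS i).1, infDist_nonneg (x := y) (s := W), (NNReal.coe_nonneg c)]
  intro z hz
  rw [hW.mem_iff_infDist_zero hWne]
  exact le_antisymm (hx ▸ hmax hz) infDist_nonneg

end General

theorem IsPreconnected.subset_or_subset_of_isClosed {α : Type*} [TopologicalSpace α]
    {s u v : Set α} (hs : IsPreconnected s) (hu : IsClosed u) (hv : IsClosed v)
    (huv : Disjoint u v) (hsuv : s ⊆ u ∪ v) : s ⊆ u ∨ s ⊆ v :=
  isPreconnected_iff_subset_of_disjoint_closed.1 hs u v hu hv hsuv (by simp [huv.inter_eq])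

section Segment

variable {E : Type*} [AddCommGroup E] [Module ℝ E] [TopologicalSpace E]
  [IsTopologicalAddGroup E] [ContinuousSMul ℝ E]

theorem exists_mem_segment_of_segment_subset_union {A B : Set E} (hA : IsClosed A)
    (hB : IsClosed B) (hAc : Convex ℝ A) (hBc : Convex ℝ B) {p q : E}
    (h : segment ℝ p q ⊆ A ∪ B) :
    ∃ x ∈ segment ℝ p q, (segment ℝ p x ⊆ A ∨ segment ℝ p x ⊆ B) ∧
      (segment ℝ x q ⊆ A ∨ segment ℝ x q ⊆ B) := by
  wlog hpA : p ∈ A generalizing A B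
  · obtain ⟨x, hx, hpx, hxq⟩ := this hB hA hBc hAc (union_comm A B ▸ h)
      ((h (left_mem_segment ℝ p q)).resolve_left hpA)
    exact ⟨x, hx, hpx.symm, hxq.symm⟩
  by_cases hqA : q ∈ A
  · refine ⟨q, right_mem_segment ℝ p q, .inl (hAc.segment_subset hpA hqA), .inl ?_⟩
    simpa using hqA
  have hqB : q ∈ B := (h (right_mem_segment ℝ p q)).resolve_left hqA
  obtain ⟨x, hx, hxA, hxB⟩ : (segment ℝ p q ∩ (A ∩ B)).Nonempty := by
    rw [nonempty_iff_ne_empty]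
    intro hempty
    rcases isPreconnected_iff_subset_of_disjoint_closed.1 (convex_segment p q).isPreconnected
      A B hA hB h hempty with hsA | hsB
    · exact hqA (hsA (right_mem_segment ℝ p q))
    · exact hempty.subset ⟨left_mem_segment ℝ p q, hpA, hsB (left_mem_segment ℝ p q)⟩
  exact ⟨x, hx, .inl (hAc.segment_subset hpA hxA), .inr (hBc.segment_subset hxB hqB)⟩

theorem exists_subsegment_of_segment_subset_union {A B : Set E} (hA : IsClosed A)
    (hB : IsClosed B) (hAc : Convex ℝ A) (hBc : Convex ℝ B) (φ : E → ℝ) {p q : E}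
    (h : segment ℝ p q ⊆ A ∪ B) :
    ∃ p' q', segment ℝ p' q' ⊆ segment ℝ p q ∧
      (segment ℝ p' q' ⊆ A ∨ segment ℝ p' q' ⊆ B) ∧
      |φ q - φ p| ≤ 2 * |φ q' - φ p'| := by
  obtain ⟨x, hx, hpx, hxq⟩ := exists_mem_segment_of_segment_subset_union hA hB hAc hBc h
  have hsplit : |φ q - φ p| ≤ |φ q - φ x| + |φ x - φ p| := abs_sub_le _ _ _
  rcases le_total |φ x - φ p| |φ q - φ x| with hle | hle
  · exact ⟨x, q, (convex_segment p q).segment_subset hx (right_mem_segment ℝ p q), hxq,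
      by linarith⟩
  · exact ⟨p, x, (convex_segment p q).segment_subset (left_mem_segment ℝ p q) hx, hpx,
      by linarith⟩

end Segment

/-- The closed equilateral triangle with horizontal base, lower-left vertex `c` and side `s`. -/
def upTriangle (c : ℂ) (s : ℝ) : Set ℂ :=
  {z | c.im ≤ z.im ∧ z.im - c.im ≤ √3 * (z.re - c.re) ∧
    z.im - c.im ≤ √3 * (c.re + s - z.re)}

theorem isClosed_upTriangle (c : ℂ) (s : ℝ) : IsClosed (upTriangle c s) := by
  simp only [upTriangle, ofPred_and]
  refine (isClosed_le ?_ ?_).inter ((isClosed_le ?_ ?_).inter (isClosed_le ?_ ?_)) <;> fun_prop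

theorem convex_upTriangle (c : ℂ) (s : ℝ) : Convex ℝ (upTriangle c s) := by
  intro z ⟨hz₁, hz₂, hz₃⟩ w ⟨hw₁, hw₂, hw₃⟩ a b ha hb hab
  obtain rfl : b = 1 - a := by linarith
  simp only [upTriangle, mem_ofPred_eq, add_re, add_im, smul_re, smul_im, smul_eq_mul]
  refine ⟨?_, ?_, ?_⟩ <;>
    nlinarith [mul_nonneg ha (sub_nonneg.2 hz₁), mul_nonneg hb (sub_nonneg.2 hw₁),
      mul_nonneg ha (sub_nonneg.2 hz₂), mul_nonneg hb (sub_nonneg.2 hw₂),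
      mul_nonneg ha (sub_nonneg.2 hz₃), mul_nonneg hb (sub_nonneg.2 hw₃)]

theorem div_add_mem_upTriangle {z : ℂ} {s d : ℝ} (hd : 0 < d) (hz : z ∈ upTriangle 0 s)
    (c : ℂ) : z / d + c ∈ upTriangle c (s / d) := by
  obtain ⟨h₁, h₂, h₃⟩ := hz
  simp only [upTriangle, mem_ofPred_eq, add_re, add_im, div_ofReal_re, div_ofReal_im,
    zero_re, zero_im, sub_zero, zero_add] at *
  refine ⟨?_, ?_, ?_⟩
  · have := div_nonneg h₁ hd.le
    linarith
  · have := div_le_div_of_nonneg_right h₂ hd.le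
    rw [mul_div_assoc] at this
    linarith
  · have := div_le_div_of_nonneg_right h₃ hd.le
    rw [mul_div_assoc, sub_div] at this
    linarith

theorem segment_subset_of_segment_subset_div_add_image {d : ℝ} (hd : d ≠ 0) (c : ℂ)
    {K : Set ℂ} {p q : ℂ} (h : segment ℝ p q ⊆ (fun w => w / d + c) '' K) :
    segment ℝ (d * (p - c)) (d * (q - c)) ⊆ K := by
  let f : ℂ →ᵃ[ℝ] ℂ :=
    { toFun := fun w => w / d + c
      linear := d⁻¹ • LinearMap.id
      map_vadd' := fun w v => by
        simp only [vadd_eq_add, LinearMap.smul_apply, LinearMap.id_coe, id_eq, real_smul,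
          ofReal_inv]
        ring }
  have hf : Injective f := fun w v hwv => by
    simpa [f, hd] using hwv
  have hinv (w : ℂ) : f (d * (w - c)) = w := by
    simp [f, hd]
  rwa [← image_subset_image_iff hf, image_segment, hinv, hinv]

def scale : Fin 5 → ℝ := ![4, 2, 4, 4, 4]

noncomputable def shift : Fin 5 → ℂ :=
  ![0, 2, 3, 1 + √3 * I, 3 / 2 + (3 * √3 / 2) * I]

theorem mainS_apply (i : Fin 5) (w : ℂ) : mainS i w = w / scale i + shift i := by
  fin_cases i <;> simp [mainS, scale, shift]

theorem two_le_scale (i : Fin 5) : 2 ≤ scale i := by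
  fin_cases i <;> norm_num [scale]

theorem contractingWith_mainS (i : Fin 5) : ContractingWith (1 / 2) (mainS i) := by
  refine ⟨by norm_num, LipschitzWith.of_dist_le_mul fun w v => ?_⟩
  have hd : 0 < scale i := by linarith [two_le_scale i]
  rw [mainS_apply, mainS_apply, dist_add_right, dist_eq, ← sub_div, norm_div, norm_real,
    Real.norm_of_nonneg hd.le, ← dist_eq, div_le_iff₀ hd]
  push_cast
  nlinarith [two_le_scale i, dist_nonneg (x := w) (y := v)]

theorem mainS_two : mainS 2 = mainS 1 ∘ mainS 1 := by
  ext w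
  show w / 4 + 3 = (w / 2 + 2) / 2 + 2
  ring

theorem upTriangle_subset_upTriangle {c c' : ℂ} {s s' : ℝ} (h : c ∈ upTriangle c' (s' - s)) :
    upTriangle c s ⊆ upTriangle c' s' := by
  obtain ⟨h₁, h₂, h₃⟩ := h
  rintro z ⟨hz₁, hz₂, hz₃⟩
  exact ⟨by linarith, by linarith, by linarith⟩

noncomputable def piece (i : Fin 5) : Set ℂ :=
  upTriangle (shift i) (4 / scale i)

theorem mapsTo_mainS_piece (i : Fin 5) : MapsTo (mainS i) (upTriangle 0 4) (piece i) := by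
  intro z hz
  rw [mainS_apply]
  exact div_add_mem_upTriangle (by linarith [two_le_scale i]) hz _

theorem piece_subset_upTriangle (i : Fin 5) : piece i ⊆ upTriangle 0 4 := by
  refine upTriangle_subset_upTriangle ?_
  fin_cases i <;> norm_num [upTriangle, scale, shift]
  exact ⟨by positivity, by linarith⟩

theorem eq_shift_four_of_mem_piece {i j : Fin 5} (hi : i ≠ 2) (hj : j ≠ 2) (hij : i ≠ j)
    {z : ℂ} (hzi : z ∈ piece i) (hzj : z ∈ piece j) : z = shift 4 ∧ (i = 3 ∨ i = 4) := by
  have h3 : 0 < √3 := by positivity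
  rw [show shift 4 = 3 / 2 + (3 * √3 / 2) * I from rfl, Complex.ext_iff]
  fin_cases i <;> fin_cases j <;> simp [Fin.ext_iff] at hi hj hij ⊢ <;>
    norm_num [piece, upTriangle, scale, shift] at hzi hzj ⊢ <;>
    obtain ⟨hi₁, hi₂, hi₃⟩ := hzi <;> obtain ⟨hj₁, hj₂, hj₃⟩ := hzj <;>
    first | nlinarith | constructor <;> nlinarith

theorem disjoint_piece {i j : Fin 5} (hi : i ≠ 2) (hj : j ≠ 2) (hij : i ≠ j)
    (hi34 : ¬(i = 3 ∨ i = 4)) : Disjoint (piece i) (piece j) :=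
  disjoint_left.2 fun _ hzi hzj => hi34 (eq_shift_four_of_mem_piece hi hj hij hzi hzj).2

theorem disjoint_piece_zero : Disjoint (piece 0) (piece 1 ∪ (piece 3 ∪ piece 4)) := by
  simp only [disjoint_union_right]
  refine ⟨?_, ?_, ?_⟩ <;> exact disjoint_piece (by decide) (by decide) (by decide) (by decide)

theorem disjoint_piece_one : Disjoint (piece 1) (piece 3 ∪ piece 4) := by
  rw [disjoint_union_right]
  constructor <;> exact disjoint_piece (by decide) (by decide) (by decide) (by decide)

section Attractor

variable {K : Set ℂ}

theorem IsAttractor.subset_upTriangle (hK : IsAttractor mainS K) : K ⊆ upTriangle 0 4 :=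
  hK.subset_of_mapsTo contractingWith_mainS (isClosed_upTriangle 0 4)
    ⟨0, by simp [upTriangle]⟩
    fun i => (mapsTo_mainS_piece i).mono_right (piece_subset_upTriangle i)

theorem IsAttractor.exists_mem_image_piece (hK : IsAttractor mainS K) {z : ℂ} (hz : z ∈ K) :
    ∃ i ≠ 2, z ∈ mainS i '' K ∧ z ∈ piece i := by
  obtain ⟨j, y, hy, rfl⟩ := mem_iUnion.1 (hK.2.2.subset hz)
  have hmem (i : Fin 5) {y : ℂ} (hy : y ∈ K) : mainS i y ∈ piece i :=
    mapsTo_mainS_piece i (hK.subset_upTriangle hy)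
  by_cases hj : j = 2
  · subst hj
    refine ⟨1, by decide, ⟨mainS 1 y, hK.mapsTo 1 hy, by rw [mainS_two]; rfl⟩, ?_⟩
    rw [mainS_two]
    exact hmem 1 (hK.mapsTo 1 hy)
  · exact ⟨j, hj, mem_image_of_mem _ hy, hmem j hy⟩

theorem IsAttractor.shift_four_mem_image (hK : IsAttractor mainS K) {i : Fin 5}
    (hi : i = 3 ∨ i = 4) : shift 4 ∈ mainS i '' K := by
  rcases hi with rfl | rfl
  · have hapex : IsFixedPt (mainS 4) (2 + 2 * √3 * I) := by
      apply Complex.ext <;> simp [mainS] <;> ring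
    refine ⟨2 + 2 * √3 * I, hK.mem_of_isFixedPt (contractingWith_mainS 4) hapex, ?_⟩
    apply Complex.ext <;> simp [mainS, shift] <;> ring
  · have hzero : IsFixedPt (mainS 0) 0 := by simp [IsFixedPt, mainS]
    exact ⟨0, hK.mem_of_isFixedPt (contractingWith_mainS 0) hzero, by simp [mainS, shift]⟩

theorem IsAttractor.mem_image_of_mem_piece (hK : IsAttractor mainS K) {i : Fin 5} (hi : i ≠ 2)
    {z : ℂ} (hz : z ∈ K) (hzi : z ∈ piece i) : z ∈ mainS i '' K := by
  obtain ⟨j, hj, hzj, hzpj⟩ := hK.exists_mem_image_piece hz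
  obtain rfl | hij := eq_or_ne i j
  · exact hzj
  obtain ⟨rfl, hi34⟩ := eq_shift_four_of_mem_piece hi hj hij hzi hzpj
  exact hK.shift_four_mem_image hi34

theorem IsAttractor.segment_subset_of_subset_piece (hK : IsAttractor mainS K) {i : Fin 5}
    (hi : i ≠ 2) {p q : ℂ} (hpqK : segment ℝ p q ⊆ K) (hpqi : segment ℝ p q ⊆ piece i) :
    segment ℝ (scale i * (p - shift i)) (scale i * (q - shift i)) ⊆ K := by
  refine segment_subset_of_segment_subset_div_add_image (by linarith [two_le_scale i]) _ ?_
  intro z hz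
  simpa only [← mainS_apply] using hK.mem_image_of_mem_piece hi (hpqK hz) (hpqi hz)

/-- Connectedness puts the segment into piece `0`, piece `1`, or pieces `3` and `4` together;
in the last case one of the two halves into which the junction `shift 4` cuts it does the job. -/
theorem IsAttractor.exists_subsegment_subset_piece (hK : IsAttractor mainS K) {p q : ℂ}
    (hpq : segment ℝ p q ⊆ K) :
    ∃ i ≠ 2, ∃ p' q', segment ℝ p' q' ⊆ segment ℝ p q ∧
      segment ℝ p' q' ⊆ piece i ∧
      2 * |q.im - p.im| ≤ scale i * |q'.im - p'.im| := by
  have hcover : segment ℝ p q ⊆ piece 0 ∪ (piece 1 ∪ (piece 3 ∪ piece 4)) := by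
    intro z hz
    obtain ⟨i, hi, -, hzi⟩ := hK.exists_mem_image_piece (hpq hz)
    fin_cases i <;> simp_all
  have hclosed (i : Fin 5) : IsClosed (piece i) := isClosed_upTriangle _ _
  have hconn : IsPreconnected (segment ℝ p q) := (convex_segment p q).isPreconnected
  rcases hconn.subset_or_subset_of_isClosed (hclosed 0)
    ((hclosed 1).union ((hclosed 3).union (hclosed 4))) disjoint_piece_zero hcover with h0 | h134
  · refine ⟨0, by decide, p, q, subset_rfl, h0, ?_⟩
    show 2 * _ ≤ 4 * _
    linarith [abs_nonneg (q.im - p.im)]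
  rcases hconn.subset_or_subset_of_isClosed (hclosed 1) ((hclosed 3).union (hclosed 4))
    disjoint_piece_one h134 with h1 | h34
  · exact ⟨1, by decide, p, q, subset_rfl, h1, le_rfl⟩
  obtain ⟨p', q', hsub, h3 | h4, hle⟩ := exists_subsegment_of_segment_subset_union (hclosed 3)
    (hclosed 4) (convex_upTriangle _ _) (convex_upTriangle _ _) im h34
  · exact ⟨3, by decide, p', q', hsub, h3, show 2 * _ ≤ 4 * _ by linarith⟩
  · exact ⟨4, by decide, p', q', hsub, h4, show 2 * _ ≤ 4 * _ by linarith⟩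

theorem IsAttractor.exists_segment_two_mul_le (hK : IsAttractor mainS K) {p q : ℂ}
    (hpq : segment ℝ p q ⊆ K) :
    ∃ p' q', segment ℝ p' q' ⊆ K ∧ 2 * |q.im - p.im| ≤ |q'.im - p'.im| := by
  obtain ⟨i, hi, p', q', hsub, hpiece, hle⟩ := hK.exists_subsegment_subset_piece hpq
  refine ⟨_, _, hK.segment_subset_of_subset_piece hi (hsub.trans hpq) hpiece, ?_⟩
  have him : (scale i * (q' - shift i)).im - (scale i * (p' - shift i)).im
      = scale i * (q'.im - p'.im) := by
    simp only [mul_im, ofReal_re, ofReal_im, sub_im, sub_re, zero_mul, add_zero]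
    ring
  rwa [him, abs_mul, abs_of_pos (show 0 < scale i by linarith [two_le_scale i])]

theorem IsAttractor.abs_im_sub_le (hK : IsAttractor mainS K) {z w : ℂ} (hz : z ∈ K)
    (hw : w ∈ K) : |w.im - z.im| ≤ 2 * √3 := by
  obtain ⟨hz₁, hz₂, hz₃⟩ := hK.subset_upTriangle hz
  obtain ⟨hw₁, hw₂, hw₃⟩ := hK.subset_upTriangle hw
  simp only [zero_re, zero_im, sub_zero, zero_add] at *
  rw [abs_le]
  constructor <;> linarith

end Attractor

/-- Every nondegenerate line segment contained in `K` is parallel to the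
`x`-axis. -/
theorem stmt11 (K : Set ℂ) (hK : IsAttractor mainS K) :
    ∀ p q : ℂ, p ≠ q → segment ℝ p q ⊆ K → p.im = q.im := by
  have hbound (n : ℕ) :
      ∀ p q : ℂ, segment ℝ p q ⊆ K → 2 ^ n * |q.im - p.im| ≤ 2 * √3 := by
    induction n with
    | zero =>
      intro p q hpq
      simpa using
        hK.abs_im_sub_le (hpq (left_mem_segment ℝ p q)) (hpq (right_mem_segment ℝ p q))
    | succ n ih =>
      intro p q hpq
      obtain ⟨p', q', hpq', hle⟩ := hK.exists_segment_two_mul_le hpq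
      calc 2 ^ (n + 1) * |q.im - p.im| = 2 ^ n * (2 * |q.im - p.im|) := by ring
        _ ≤ 2 ^ n * |q'.im - p'.im| := by gcongr
        _ ≤ 2 * √3 := ih p' q' hpq'
  intro p q _ hpq
  by_contra hne
  have hpos : 0 < |q.im - p.im| := abs_pos.2 (sub_ne_zero.2 (Ne.symm hne))
  obtain ⟨n, hn⟩ := pow_unbounded_of_one_lt (2 * √3 / |q.im - p.im|) one_lt_two
  rw [div_lt_iff₀ hpos] at hn
  linarith [hbound n p q hpq]
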